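/- arXiv:1708.00829 — 2 statements merged into one kernel-verified Lean document; each statement's English description precedes it below -/
import Mathlib

section
/- Let P be a Markov transition kernel on X, R_0 ⊆ X measurable, and suppose P(x,·) ≥ ε Q(·) for all x in a set R ⊆ R_0, where ε > 0 and Q is a probability measure on X with Q(R_0) > 0. Define the restricted kernel P̃ on R_0 by P̃(x, B) = P(x, B) for B ⊆ R_0 with x ∉ B, and P̃(x,{x}) = 1 − P(x, R_0 \ {x}). Then P̃(x,·) ≥ ε Q(R_0) · Q(· | R_0) for all x ∈ R ∩ R_0, where Q(·|R_0) denotes Q conditioned on R_0. -/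
open MeasureTheory ProbabilityTheory

/-!
Away from `x`, `P̃(x, ·)` agrees with `P(x, ·)` on `R₀ \ {x}`, where it dominates `ε Q`; at `x`
itself the holding mass `1 - P(x, R₀ \ {x})` is at least `P(x, {x}) ≥ ε Q {x}`. Hence
`P̃(x, ·) ≥ ε Q|_{R₀}`, and `Q|_{R₀} ≥ Q(R₀) Q(· | R₀)`.
-/

namespace MeasureTheory.Measure

variable {X : Type*} [MeasurableSpace X]

/-- `P̃(x, ·)` for `ν = P(x, ·)`: the step of the chain restricted to `s`, which stays at `x`
whenever `ν` would leave `s`. -/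
noncomputable def stayInStep (ν : Measure X) (s : Set X) (x : X) : Measure X :=
  ν.restrict (s \ {x}) + (1 - ν (s \ {x})) • dirac x

lemma smul_cond_le_restrict (μ : Measure X) (s : Set X) : μ s • μ[|s] ≤ μ.restrict s := by
  calc μ s • μ[|s] = (μ s * (μ s)⁻¹) • μ.restrict s := by
        rw [ProbabilityTheory.cond, smul_smul]
    _ ≤ (1 : ENNReal) • μ.restrict s := by gcongr; exact ENNReal.mul_inv_le_one _
    _ = μ.restrict s := one_smul _ _

variable [MeasurableSingletonClass X]

lemma measure_singleton_add_diff_singleton_le_one (ν : Measure X) [IsProbabilityMeasure ν]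
    (s : Set X) (x : X) : ν {x} + ν (s \ {x}) ≤ 1 := by
  rw [← measure_union' Set.disjoint_sdiff_right (measurableSet_singleton x)]
  exact prob_le_one

lemma smul_restrict_le_stayInStep {μ ν : Measure X} [IsProbabilityMeasure ν] {c : ENNReal}
    (hμν : c • μ ≤ ν) (s : Set X) (x : X) : c • μ.restrict s ≤ ν.stayInStep s x := by
  have hstay : c * μ {x} ≤ 1 - ν (s \ {x}) :=
    ENNReal.le_sub_of_add_le_right (measure_ne_top _ _)
      ((add_le_add_left (hμν {x}) _).trans (measure_singleton_add_diff_singleton_le_one ν s x))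
  calc c • μ.restrict s ≤ c • μ.restrict (s \ {x} ∪ {x}) := by
        gcongr
        exact Set.subset_sdiff_union s {x}
    _ ≤ c • (μ.restrict (s \ {x}) + μ {x} • dirac x) := by
        gcongr
        rw [← restrict_singleton]
        exact restrict_union_le _ _
    _ = (c • μ).restrict (s \ {x}) + (c * μ {x}) • dirac x := by
        rw [smul_add, restrict_smul, smul_smul]
    _ ≤ ν.stayInStep s x := by
        unfold stayInStep
        gcongr

end MeasureTheory.Measure

theorem stmt_2_general {X : Type*} [MeasurableSpace X] [MeasurableSingletonClass X]
    (P : Kernel X X) [IsMarkovKernel P]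
    (Q : Measure X)
    (R R₀ : Set X)
    (ε : ENNReal)
    (hminor : ∀ x ∈ R, ∀ B : Set X, MeasurableSet B → ε * Q B ≤ P x B)
    (Ptilde : X → Measure X)
    (hPtilde : ∀ x, Ptilde x =
      (P x).restrict (R₀ \ {x}) + (1 - P x (R₀ \ {x})) • Measure.dirac x) :
    ∀ x ∈ R ∩ R₀, ∀ B : Set X, MeasurableSet B →
      (ε * Q R₀) * (Q[|R₀]) B ≤ Ptilde x B := by
  intro x hx B _
  have hminor_x : ε • Q ≤ P x := Measure.le_iff.mpr (hminor x hx.1)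
  calc (ε * Q R₀) * (Q[|R₀]) B = (ε • (Q R₀ • Q[|R₀])) B := by
        simp only [Measure.smul_apply, smul_eq_mul, mul_assoc]
    _ ≤ (ε • Q.restrict R₀) B := smul_le_smul_left ε (Measure.smul_cond_le_restrict Q R₀) B
    _ ≤ Ptilde x B := by
        rw [hPtilde]
        exact Measure.smul_restrict_le_stayInStep hminor_x R₀ x B

/-- If P(x,·) ≥ ε Q(·) for all x in R ⊆ R₀, with ε > 0 and Q(R₀) > 0,
then the restricted kernel P̃ on R₀ (move by P but stay put when P would leave R₀,
i.e. P̃(x,B) = P(x, B ∩ R₀ \ {x}) + (1 − P(x, R₀ \ {x})) δ_x(B)) satisfies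
P̃(x,·) ≥ ε Q(R₀) · Q(·|R₀) for all x ∈ R ∩ R₀. -/
theorem stmt_2 {X : Type*} [MeasurableSpace X] [MeasurableSingletonClass X]
    (P : Kernel X X) [IsMarkovKernel P]
    (Q : Measure X) [IsProbabilityMeasure Q]
    (R R₀ : Set X) (hR₀ : MeasurableSet R₀) (hRR₀ : R ⊆ R₀)
    (ε : ENNReal) (hε : 0 < ε)
    (hminor : ∀ x ∈ R, ∀ B : Set X, MeasurableSet B → ε * Q B ≤ P x B)
    (hQR₀ : 0 < Q R₀)
    (Ptilde : X → Measure X)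
    (hPtilde : ∀ x, Ptilde x =
      (P x).restrict (R₀ \ {x}) + (1 - P x (R₀ \ {x})) • Measure.dirac x) :
    ∀ x ∈ R ∩ R₀, ∀ B : Set X, MeasurableSet B →
      (ε * Q R₀) * (Q[|R₀]) B ≤ Ptilde x B :=
  stmt_2_general P Q R R₀ ε hminor Ptilde hPtilde
end

section
/- For fixed positive reals a, b, V, let h_n(Δ) = [∫_0^∞ A^{−a−2} e^{−b/A} (V+A)^{−(n−1)/2} exp(−Δ/(2(V+A))) dA] / [∫_0^∞ A^{−a−1} e^{−b/A} (V+A)^{−(n−1)/2} exp(−Δ/(2(V+A))) dA]. Then for any fixed c > 0, h_n((n−1)(c+V)) → 1/c as n → ∞. -/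
/-!
Put `s = (c + V) / (V + A)` and `r = (n - 1) / 2`. Up to a factor independent of `A`,
`(V + A) ^ (-r) * exp (-r (c + V) / (V + A))` is `exp (r * (log s - s + 1))`, and
`log s - s + 1 ≤ 0` with equality only at `s = 1`, i.e. at `A = c`. So as `r → ∞` the
weights `A ^ (-a - 1) * exp (-b / A) * exp (r * (log s - s + 1))` concentrate at `A = c`
(Laplace's method), and the weighted mean of `1 / A`, which is `h_n`, tends to `1 / c`.
-/

open MeasureTheory Filter Set Metric Real Topology

section Concentration

variable {α : Type*} [MeasurableSpace α] {μ : Measure α} {f g w : α → ℝ} {r : ℝ}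

theorem integrable_mul_exp_mul_of_nonpos (hw : Integrable w μ) (hg : AEStronglyMeasurable g μ)
    (hg0 : ∀ᵐ x ∂μ, g x ≤ 0) (hr : 0 ≤ r) :
    Integrable (fun x => w x * exp (r * g x)) μ := by
  refine hw.mul_bdd (c := 1) (continuous_exp.comp_aestronglyMeasurable (hg.const_mul r)) ?_
  filter_upwards [hg0] with x hx
  rw [norm_of_nonneg (exp_pos _).le, exp_le_one_iff]
  exact mul_nonpos_of_nonneg_of_nonpos hr hx

variable [PseudoMetricSpace α] {c : α}

theorem abs_integral_mul_exp_sub_le {δ η ε : ℝ} (hw : Integrable w μ) (hw0 : 0 ≤ᵐ[μ] w)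
    (hfw : Integrable (fun x => f x * w x) μ) (hg : AEStronglyMeasurable g μ)
    (hg0 : ∀ᵐ x ∂μ, g x ≤ 0) (hr : 0 ≤ r) (hε : 0 ≤ ε)
    (hnear : ∀ x, dist x c < δ → |f x - f c| ≤ ε)
    (hfar : ∀ᵐ x ∂μ, δ ≤ dist x c → g x ≤ -η) :
    |(∫ x, f x * w x * exp (r * g x) ∂μ) - f c * ∫ x, w x * exp (r * g x) ∂μ| ≤
      ε * (∫ x, w x * exp (r * g x) ∂μ) +
        exp (-(r * η)) * ∫ x, |f x - f c| * w x ∂μ := by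
  have hdw : Integrable (fun x => (f x - f c) * w x) μ :=
    (hfw.sub (hw.const_mul (f c))).congr (ae_of_all _ fun x => by simp only [Pi.sub_apply]; ring)
  have hC : Integrable (fun x => |f x - f c| * w x) μ :=
    hdw.abs.congr (by filter_upwards [hw0] with x hx; rw [abs_mul, abs_of_nonneg hx])
  have hN := integrable_mul_exp_mul_of_nonpos hfw hg hg0 hr
  have hD := integrable_mul_exp_mul_of_nonpos hw hg hg0 hr
  have hE := integrable_mul_exp_mul_of_nonpos hdw hg hg0 hr
  have hpointwise : ∀ᵐ x ∂μ, |(f x - f c) * w x * exp (r * g x)| ≤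
      ε * (w x * exp (r * g x)) + exp (-(r * η)) * (|f x - f c| * w x) := by
    filter_upwards [hw0, hfar] with x hwx hfarx
    rw [abs_mul, abs_mul, abs_of_nonneg hwx, abs_of_pos (exp_pos _)]
    have hexp := (exp_pos (r * g x)).le
    have hdev := mul_nonneg (abs_nonneg (f x - f c)) hwx
    rcases lt_or_ge (dist x c) δ with hx | hx
    · have := hnear x hx
      nlinarith [mul_nonneg hwx hexp, mul_nonneg (exp_pos (-(r * η))).le hdev]
    · have : exp (r * g x) ≤ exp (-(r * η)) := exp_le_exp.2 (by nlinarith [hfarx hx])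
      nlinarith [mul_nonneg hε (mul_nonneg hwx hexp)]
  calc _ = |∫ x, (f x - f c) * w x * exp (r * g x) ∂μ| := by
        rw [← integral_const_mul, ← integral_sub hN (hD.const_mul _)]
        congr 2 with x
        ring
    _ ≤ ∫ x, |(f x - f c) * w x * exp (r * g x)| ∂μ := abs_integral_le_integral_abs
    _ ≤ ∫ x, ε * (w x * exp (r * g x)) + exp (-(r * η)) * (|f x - f c| * w x) ∂μ :=
        integral_mono_ae hE.abs ((hD.const_mul _).add (hC.const_mul _)) hpointwise
    _ = _ := by
        rw [integral_add (hD.const_mul _) (hC.const_mul _), integral_const_mul,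
          integral_const_mul]

variable [OpensMeasurableSpace α]

theorem exp_mul_setIntegral_le_integral_mul_exp {δ η : ℝ}
    (hw : Integrable w μ) (hw0 : 0 ≤ᵐ[μ] w)
    (hint : Integrable (fun x => w x * exp (r * g x)) μ)
    (hnear : ∀ x ∈ ball c δ, -η ≤ g x) (hr : 0 ≤ r) :
    exp (-(r * η)) * ∫ x in ball c δ, w x ∂μ ≤ ∫ x, w x * exp (r * g x) ∂μ := by
  rw [← integral_const_mul]
  calc ∫ x in ball c δ, exp (-(r * η)) * w x ∂μ
      ≤ ∫ x in ball c δ, w x * exp (r * g x) ∂μ := by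
        refine integral_mono_ae (hw.integrableOn.const_mul _) hint.integrableOn ?_
        filter_upwards [ae_restrict_mem measurableSet_ball, ae_restrict_of_ae hw0] with x hx hwx
        rw [mul_comm]
        exact mul_le_mul_of_nonneg_left (exp_le_exp.2 (by nlinarith [hnear x hx])) hwx
    _ ≤ ∫ x, w x * exp (r * g x) ∂μ :=
        setIntegral_le_integral hint (by
          filter_upwards [hw0] with x hx using mul_nonneg hx (exp_pos _).le)

theorem tendsto_integral_mul_exp_div_integral_exp (hw : Integrable w μ) (hw0 : 0 ≤ᵐ[μ] w)
    (hfw : Integrable (fun x => f x * w x) μ) (hg : AEStronglyMeasurable g μ)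
    (hg0 : ∀ᵐ x ∂μ, g x ≤ 0) (hgc : Tendsto g (𝓝 c) (𝓝 0))
    (hsep : ∀ δ > 0, ∃ η > 0, ∀ᵐ x ∂μ, δ ≤ dist x c → g x ≤ -η)
    (hmass : ∀ δ > 0, 0 < ∫ x in ball c δ, w x ∂μ) (hf : ContinuousAt f c) :
    Tendsto (fun r => (∫ x, f x * w x * exp (r * g x) ∂μ) / ∫ x, w x * exp (r * g x) ∂μ)
      atTop (𝓝 (f c)) := by
  rw [Metric.tendsto_nhds]
  intro ε hε
  obtain ⟨δ, hδ, hfδ⟩ := Metric.continuousAt_iff.mp hf (ε / 2) (half_pos hε)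
  obtain ⟨η, hη, hfar⟩ := hsep δ hδ
  obtain ⟨δ', hδ', hgδ'⟩ := Metric.tendsto_nhds_nhds.mp hgc (η / 2) (half_pos hη)
  set κ := ∫ x in ball c δ', w x ∂μ
  have hκ : 0 < κ := hmass δ' hδ'
  set C := ∫ x, |f x - f c| * w x ∂μ
  have hC : 0 ≤ C := integral_nonneg_of_ae (by
    filter_upwards [hw0] with x hx using mul_nonneg (abs_nonneg _) hx)
  have hsmall : ∀ᶠ r : ℝ in atTop, C / κ * exp (-(r * (η / 2))) < ε / 2 := by
    have : Tendsto (fun r : ℝ => C / κ * exp (-(r * (η / 2)))) atTop (𝓝 (C / κ * 0)) :=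
      (tendsto_exp_neg_atTop_nhds_zero.comp (tendsto_id.atTop_mul_const (half_pos hη))).const_mul _
    exact (mul_zero (C / κ) ▸ this).eventually_lt_const (half_pos hε)
  filter_upwards [hsmall, eventually_ge_atTop 0] with r hrε hr
  set D := ∫ x, w x * exp (r * g x) ∂μ
  -- The mass near `c` decays only like `exp (-r η / 2)`,
  -- the contribution away from `c` like `exp (-r η)`.
  have hD : exp (-(r * (η / 2))) * κ ≤ D :=
    exp_mul_setIntegral_le_integral_mul_exp hw hw0 (integrable_mul_exp_mul_of_nonpos hw hg hg0 hr)
      (fun x hx => (neg_lt_of_abs_lt (by simpa using hgδ' hx)).le) hr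
  have hD0 : 0 < D := lt_of_lt_of_le (by positivity) hD
  have hfar_part : exp (-(r * η)) * C < ε / 2 * D :=
    calc exp (-(r * η)) * C = C / κ * exp (-(r * (η / 2))) * (exp (-(r * (η / 2))) * κ) := by
          rw [show -(r * η) = -(r * (η / 2)) + -(r * (η / 2)) by ring, exp_add]
          field_simp
      _ ≤ C / κ * exp (-(r * (η / 2))) * D := by gcongr
      _ < ε / 2 * D := by gcongr
  have herr := abs_integral_mul_exp_sub_le hw hw0 hfw hg hg0 hr (half_pos hε).le
    (fun x hx => (hfδ hx).le) hfar
  rw [Real.dist_eq, div_sub' hD0.ne', abs_div, abs_of_pos hD0, div_lt_iff₀ hD0, mul_comm D]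
  linarith

end Concentration

noncomputable def logGap (s : ℝ) : ℝ := log s - s + 1

theorem logGap_one : logGap 1 = 0 := by simp [logGap]

theorem logGap_nonpos {s : ℝ} (hs : 0 < s) : logGap s ≤ 0 := by
  have := log_le_sub_one_of_pos hs
  unfold logGap; linarith

theorem logGap_neg {s : ℝ} (hs : 0 < s) (h1 : s ≠ 1) : logGap s < 0 := by
  have := log_lt_sub_one_of_pos hs h1
  unfold logGap; linarith

theorem monotoneOn_logGap : MonotoneOn logGap (Ioc 0 1) := by
  intro t ⟨ht, _⟩ s ⟨_, hs1⟩ hts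
  have hs : 0 < s := ht.trans_le hts
  have hlog := log_le_sub_one_of_pos (div_pos ht hs)
  rw [log_div ht.ne' hs.ne'] at hlog
  have : t / s - 1 ≤ t - s := by
    rw [div_sub_one hs.ne', div_le_iff₀ hs]; nlinarith
  unfold logGap; linarith

theorem antitoneOn_logGap : AntitoneOn logGap (Ici 1) := by
  intro s (hs1 : 1 ≤ s) t _ hst
  have hs : 0 < s := zero_lt_one.trans_le hs1
  have ht : 0 < t := hs.trans_le hst
  have hlog := log_le_sub_one_of_pos (div_pos ht hs)
  rw [log_div ht.ne' hs.ne'] at hlog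
  have : t / s - 1 ≤ t - s := by
    rw [div_sub_one hs.ne', div_le_iff₀ hs]; nlinarith
  unfold logGap; linarith

section

variable {V c : ℝ}

theorem exists_logGap_div_le_neg (hV : 0 < V) (hc : 0 < c) {δ : ℝ} (hδ : 0 < δ) :
    ∃ η > 0, ∀ A > 0, δ ≤ |A - c| → logGap ((c + V) / (V + A)) ≤ -η := by
  set δ₀ := min δ c
  have hδ₀ : 0 < δ₀ := lt_min hδ hc
  have hδ₀c : δ₀ ≤ c := min_le_right δ c
  set s₁ := (c + V) / (V + (c - δ₀))
  set s₂ := (c + V) / (V + (c + δ₀))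
  have hs₁ : 1 < s₁ := by rw [one_lt_div (by linarith)]; linarith
  have hs₂ : s₂ < 1 := by rw [div_lt_one (by linarith)]; linarith
  have hη₁ := logGap_neg (by linarith) hs₁.ne'
  have hη₂ := logGap_neg (by positivity) hs₂.ne
  refine ⟨min (-logGap s₁) (-logGap s₂), lt_min (by linarith) (by linarith),
    fun A hA hδA => ?_⟩
  have hsA : 0 < (c + V) / (V + A) := by positivity
  rcases le_abs'.mp ((min_le_left δ c).trans hδA) with hleft | hright
  · have hs₁A : s₁ ≤ (c + V) / (V + A) :=
      div_le_div_of_nonneg_left (by linarith) (by linarith) (by linarith)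
    have := antitoneOn_logGap hs₁.le (hs₁.le.trans hs₁A) hs₁A
    linarith [min_le_left (-logGap s₁) (-logGap s₂)]
  · have hs₂A : (c + V) / (V + A) ≤ s₂ :=
      div_le_div_of_nonneg_left (by linarith) (by linarith) (by linarith)
    have := monotoneOn_logGap ⟨hsA, hs₂A.trans hs₂.le⟩ ⟨hsA.trans_le hs₂A, hs₂.le⟩
      hs₂A
    linarith [min_le_right (-logGap s₁) (-logGap s₂)]

theorem tendsto_logGap_div (hV : 0 < V) (hc : 0 < c) :
    Tendsto (fun A => logGap ((c + V) / (V + A))) (𝓝 c) (𝓝 0) := by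
  have hcV : c + V ≠ 0 := by positivity
  have hquot : ContinuousAt (fun A => (c + V) / (V + A)) c := by fun_prop (disch := positivity)
  have : ContinuousAt (fun A => logGap ((c + V) / (V + A))) c :=
    ((hquot.log (by positivity)).sub hquot).add continuousAt_const
  simpa [add_comm V c, div_self hcV, logGap_one] using this.tendsto

theorem setIntegral_mul_rpow_neg_mul_exp_eq (hV : 0 < V) (hc : 0 < c) (u : ℝ → ℝ) (t : ℝ) :
    ∫ A in Ioi 0, u A * (V + A) ^ (-(t / 2)) * exp (-(t * (c + V)) / (2 * (V + A))) =
      exp (-(t / 2 * (log (c + V) + 1))) *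
        ∫ A in Ioi 0, u A * exp (t / 2 * logGap ((c + V) / (V + A))) := by
  rw [← integral_const_mul]
  refine setIntegral_congr_fun measurableSet_Ioi fun A (hA : 0 < A) => ?_
  rw [mul_assoc, rpow_def_of_pos (by positivity), ← exp_add, mul_left_comm, ← exp_add, logGap,
    log_div (by positivity) (by positivity)]
  congr 2
  field_simp
  ring

end

theorem integrableOn_rpow_mul_exp_neg_div {q b : ℝ} (hq : q < -1) (hb : 0 < b) :
    IntegrableOn (fun x : ℝ => x ^ q * exp (-b / x)) (Ioi 0) := by
  have := (integrableOn_Ioi_comp_rpow_iff' _ (by norm_num : (-1 : ℝ) ≠ 0)).mpr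
    (integrableOn_rpow_mul_exp_neg_mul_rpow (s := -q - 2) (p := 1) (by linarith) one_pos hb)
  refine this.congr_fun (fun x hx => ?_) measurableSet_Ioi
  simp only [smul_eq_mul, rpow_one, rpow_neg_one]
  rw [inv_rpow hx.le, ← rpow_neg hx.le, ← mul_assoc, ← rpow_add hx, div_eq_mul_inv]
  ring_nf

theorem setIntegral_ball_inter_Ioi_pos {w : ℝ → ℝ} {c δ : ℝ} (hc : 0 < c) (hδ : 0 < δ)
    (hw : IntegrableOn w (Ioi 0)) (hpos : ∀ A > 0, 0 < w A) :
    0 < ∫ A in ball c δ, w A ∂volume.restrict (Ioi 0) := by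
  rw [Measure.restrict_restrict measurableSet_ball,
    setIntegral_pos_iff_support_of_nonneg_ae
      (ae_restrict_of_forall_mem (measurableSet_ball.inter measurableSet_Ioi)
        fun A hA => (hpos A hA.2).le)
      (hw.mono_set inter_subset_right)]
  exact ((isOpen_ball.inter isOpen_Ioi).measure_pos volume ⟨c, mem_ball_self hδ, hc⟩).trans_le
    (measure_mono fun A hA => ⟨(hpos A hA.2).ne', hA⟩)

/-- For fixed a, b, V > 0 and h_n(Δ) the ratio of the two integrals
∫₀^∞ A^{−a−2} e^{−b/A} (V+A)^{−(n−1)/2} exp(−Δ/(2(V+A))) dA and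
∫₀^∞ A^{−a−1} e^{−b/A} (V+A)^{−(n−1)/2} exp(−Δ/(2(V+A))) dA,
we have h_n((n−1)(c+V)) → 1/c as n → ∞, for any fixed c > 0. -/
theorem stmt_16 (a b V c : ℝ) (ha : 0 < a) (hb : 0 < b) (hV : 0 < V) (hc : 0 < c) :
    Tendsto (fun n : ℕ =>
      (∫ A in Set.Ioi (0 : ℝ), A ^ (-a - 2) * Real.exp (-b / A) *
          (V + A) ^ (-(((n : ℝ) - 1) / 2)) *
          Real.exp (-(((n : ℝ) - 1) * (c + V)) / (2 * (V + A)))) /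
      (∫ A in Set.Ioi (0 : ℝ), A ^ (-a - 1) * Real.exp (-b / A) *
          (V + A) ^ (-(((n : ℝ) - 1) / 2)) *
          Real.exp (-(((n : ℝ) - 1) * (c + V)) / (2 * (V + A)))))
      atTop (nhds (1 / c)) := by
  set w : ℝ → ℝ := fun A => A ^ (-a - 1) * exp (-b / A)
  set g : ℝ → ℝ := fun A => logGap ((c + V) / (V + A))
  have hw : IntegrableOn w (Ioi 0) := integrableOn_rpow_mul_exp_neg_div (by linarith) hb
  have hw_pos : ∀ A > 0, 0 < w A := fun A hA => by positivity
  have hnum : ∀ A ∈ Ioi (0 : ℝ), A ^ (-a - 2) * exp (-b / A) = A⁻¹ * w A := fun A hA => by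
    rw [show -a - 2 = -a - 1 - 1 by ring, rpow_sub_one (ne_of_gt hA), div_eq_inv_mul]
    ring
  have hlim := tendsto_integral_mul_exp_div_integral_exp (f := fun A => A⁻¹) hw
    (ae_restrict_of_forall_mem measurableSet_Ioi fun A hA => (hw_pos A hA).le)
    ((integrableOn_rpow_mul_exp_neg_div (by linarith) hb).congr_fun hnum measurableSet_Ioi)
    (by simp only [g, logGap]; fun_prop : Measurable g).aestronglyMeasurable
    (ae_restrict_of_forall_mem measurableSet_Ioi fun A (hA : 0 < A) =>
      logGap_nonpos (by positivity))
    (tendsto_logGap_div hV hc)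
    (fun δ hδ => (exists_logGap_div_le_neg hV hc hδ).imp fun η ⟨hη, hsep⟩ =>
      ⟨hη, ae_restrict_of_forall_mem measurableSet_Ioi hsep⟩)
    (fun δ hδ => setIntegral_ball_inter_Ioi_pos hc hδ hw hw_pos) (continuousAt_inv₀ hc.ne')
  have hr : Tendsto (fun n : ℕ => ((n : ℝ) - 1) / 2) atTop atTop :=
    (tendsto_atTop_add_const_right _ (-1) tendsto_natCast_atTop_atTop).atTop_div_const two_pos
  refine one_div c ▸ (hlim.comp hr).congr fun n => ?_
  simp only [Function.comp_apply, setIntegral_mul_rpow_neg_mul_exp_eq hV hc,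
    mul_div_mul_left _ _ (exp_ne_zero _)]
  congr 1
  exact setIntegral_congr_fun measurableSet_Ioi fun A hA => by rw [hnum A hA]
end
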